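/- Let G₁ and G₂ be simple graphs with vertex sets V₁ and V₂, with a soft rough datum (A, F₁, X) on G₁ and a soft rough datum (B, F₂, Y) on G₂. Then the Cartesian product of the lower approximation pairs is a subgraph of the Cartesian product graph G₁ × G₂: for the pair with vertex set F₁_*(X) × F₂_*(Y) and edge set {{(u,v),(u,w)} | u ∈ F₁_*(X), {v,w} ∈ K₂_*(Y)} ∪ {{(u,w),(v,w)} | w ∈ F₂_*(Y), {u,v} ∈ K₁_*(X)}, every edge is an edge of G₁ × G₂ and has both endpoints in F₁_*(X) × F₂_*(Y); and the same statement holds with the upper approximations F₁^*(X), K₁^*(X), F₂^*(Y), K₂^*(Y) in place of the lower ones. -/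
import Mathlib


/-- The set of edges of `G` with both endpoints in `S`
(the soft set `K(a)` when `S = F(a)`). -/
def edgesIn {V : Type*} (G : SimpleGraph V) (S : Set V) : Set (Sym2 V) :=
  {e ∈ G.edgeSet | ∀ v ∈ e, v ∈ S}

/-- Lower soft rough vertex approximation `F_*(X)`. -/
def lowerV {V A : Type*} (F : A → Set V) (X : Set V) : Set V :=
  {u | ∃ a, u ∈ F a ∧ F a ⊆ X}

/-- Upper soft rough vertex approximation `F^*(X)`. -/
def upperV {V A : Type*} (F : A → Set V) (X : Set V) : Set V :=
  {u | ∃ a, u ∈ F a ∧ (F a ∩ X).Nonempty}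

/-- Lower soft rough edge approximation `K_*(X)`. -/
def lowerE {V A : Type*} (G : SimpleGraph V) (F : A → Set V) (X : Set V) :
    Set (Sym2 V) :=
  {e | ∃ a, e ∈ edgesIn G (F a) ∧ F a ⊆ X}

/-- Upper soft rough edge approximation `K^*(X)`. -/
def upperE {V A : Type*} (G : SimpleGraph V) (F : A → Set V) (X : Set V) :
    Set (Sym2 V) :=
  {e | ∃ a, e ∈ edgesIn G (F a) ∧ (F a ∩ X).Nonempty}

/-- The edge set of the Cartesian product of two vertex/edge pairs
`(Sv, Se)` and `(Tv, Te)`. -/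
def cartProdEdges {V₁ V₂ : Type*} (Sv : Set V₁) (Se : Set (Sym2 V₁))
    (Tv : Set V₂) (Te : Set (Sym2 V₂)) : Set (Sym2 (V₁ × V₂)) :=
  {e | (∃ u ∈ Sv, ∃ v w, s(v, w) ∈ Te ∧ e = s((u, v), (u, w))) ∨
       (∃ x ∈ Tv, ∃ u v, s(u, v) ∈ Se ∧ e = s((u, x), (v, x)))}

lemma lowerE_adj {V A : Type*} {G : SimpleGraph V} {F : A → Set V} {X : Set V}
    {v w : V} (h : s(v, w) ∈ lowerE G F X) :
    G.Adj v w ∧ v ∈ lowerV F X ∧ w ∈ lowerV F X := by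
  obtain ⟨a, ⟨he, hall⟩, hsub⟩ := h
  exact ⟨he, ⟨a, hall v (by simp), hsub⟩, ⟨a, hall w (by simp), hsub⟩⟩

lemma upperE_adj {V A : Type*} {G : SimpleGraph V} {F : A → Set V} {X : Set V}
    {v w : V} (h : s(v, w) ∈ upperE G F X) :
    G.Adj v w ∧ v ∈ upperV F X ∧ w ∈ upperV F X := by
  obtain ⟨a, ⟨he, hall⟩, hne⟩ := h
  exact ⟨he, ⟨a, hall v (by simp), hne⟩, ⟨a, hall w (by simp), hne⟩⟩

lemma cart_aux {V₁ V₂ : Type*} (G₁ : SimpleGraph V₁) (G₂ : SimpleGraph V₂)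
    (Sv : Set V₁) (Se : Set (Sym2 V₁)) (Tv : Set V₂) (Te : Set (Sym2 V₂))
    (hS : ∀ {u v : V₁}, s(u, v) ∈ Se → G₁.Adj u v ∧ u ∈ Sv ∧ v ∈ Sv)
    (hT : ∀ {u v : V₂}, s(u, v) ∈ Te → G₂.Adj u v ∧ u ∈ Tv ∧ v ∈ Tv) :
    cartProdEdges Sv Se Tv Te ⊆ (G₁ □ G₂).edgeSet ∧
      ∀ e ∈ cartProdEdges Sv Se Tv Te, ∀ p ∈ e, p ∈ Sv ×ˢ Tv := by
  constructor
  · rintro e (⟨u, hu, v, w, hvw, rfl⟩ | ⟨x, hx, u, v, huv, rfl⟩)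
    · exact SimpleGraph.boxProd_adj.2 (Or.inr ⟨(hT hvw).1, rfl⟩)
    · exact SimpleGraph.boxProd_adj.2 (Or.inl ⟨(hS huv).1, rfl⟩)
  · rintro e (⟨u, hu, v, w, hvw, rfl⟩ | ⟨x, hx, u, v, huv, rfl⟩) p hp
    · obtain ⟨_, h1, h2⟩ := hT hvw
      rcases Sym2.mem_iff.1 hp with rfl | rfl
      · exact ⟨hu, h1⟩
      · exact ⟨hu, h2⟩
    · obtain ⟨_, h1, h2⟩ := hS huv
      rcases Sym2.mem_iff.1 hp with rfl | rfl
      · exact ⟨h1, hx⟩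
      · exact ⟨h2, hx⟩

/-- the Cartesian product of the lower (resp. upper)
approximation pairs of soft rough graphs of `G₁` and `G₂` is a subgraph of the
Cartesian (box) product `G₁ □ G₂`: every edge of the product edge set is an
edge of `G₁ □ G₂` and has both endpoints in the product of the corresponding
vertex approximations. -/
theorem cartesian_product_soft_rough {V₁ V₂ A B : Type*}
    (G₁ : SimpleGraph V₁) (G₂ : SimpleGraph V₂)
    (F₁ : A → Set V₁) (X : Set V₁) (F₂ : B → Set V₂) (Y : Set V₂) :
    (cartProdEdges (lowerV F₁ X) (lowerE G₁ F₁ X) (lowerV F₂ Y)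
        (lowerE G₂ F₂ Y) ⊆ (G₁ □ G₂).edgeSet ∧
      ∀ e ∈ cartProdEdges (lowerV F₁ X) (lowerE G₁ F₁ X) (lowerV F₂ Y)
          (lowerE G₂ F₂ Y), ∀ p ∈ e, p ∈ lowerV F₁ X ×ˢ lowerV F₂ Y) ∧
    (cartProdEdges (upperV F₁ X) (upperE G₁ F₁ X) (upperV F₂ Y)
        (upperE G₂ F₂ Y) ⊆ (G₁ □ G₂).edgeSet ∧
      ∀ e ∈ cartProdEdges (upperV F₁ X) (upperE G₁ F₁ X) (upperV F₂ Y)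
          (upperE G₂ F₂ Y), ∀ p ∈ e, p ∈ upperV F₁ X ×ˢ upperV F₂ Y) := by
  exact ⟨cart_aux G₁ G₂ _ _ _ _ (fun h => lowerE_adj h) (fun h => lowerE_adj h),
    cart_aux G₁ G₂ _ _ _ _ (fun h => upperE_adj h) (fun h => upperE_adj h)⟩
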